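/- arXiv:2511.01497 — 5 statements merged into one kernel-verified Lean document; each statement's English description precedes it below -/
import Mathlib

section
/- Let A be a small category and F : Aᵒᵖ ⥤ Type a presheaf. If F is a filtered colimit of representable presheaves, then the left Kan extension of F along the (contravariant) Yoneda embedding Aᵒᵖ ⥤ (A ⥤ Type) preserves finite limits. -/
/-!
Left Kan extension along `coyoneda` is a left adjoint, so it commutes with colimits, and the
extension of a colimit of representables `colim yoneda (D i)` is the colimit of the extensions of
the `yoneda (D i)`. By the Yoneda lemma the extension of `yoneda a` is evaluation at `a`, which
preserves all limits; and in `Type`, filtered colimits commute with finite limits.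
-/

open CategoryTheory Limits Opposite

universe u v

namespace CategoryTheory

section

variable {A : Type u} [Category.{v} A] (a : A)

def yonedaToCoyonedaCompEvaluation :
    yoneda.obj a ⟶ coyoneda ⋙ (evaluation A (Type v)).obj a where
  app _ := TypeCat.ofHom id

variable {a} {H : (A ⥤ Type v) ⥤ Type v}

noncomputable def evaluationDesc (β : yoneda.obj a ⟶ coyoneda ⋙ H) :
    (evaluation A (Type v)).obj a ⟶ H where
  app M := TypeCat.ofHom fun x => H.map (coyonedaEquiv.symm x) (β.app (op a) (𝟙 a))
  naturality M N f := by
    ext x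
    have : coyonedaEquiv.symm (f.app a x) = coyonedaEquiv.symm x ≫ f := by
      rw [Equiv.symm_apply_eq, coyonedaEquiv_comp, Equiv.apply_symm_apply]
    simp [this]

lemma yonedaToCoyonedaCompEvaluation_comp_evaluationDesc (β : yoneda.obj a ⟶ coyoneda ⋙ H) :
    yonedaToCoyonedaCompEvaluation a ≫ Functor.whiskerLeft coyoneda (evaluationDesc β) = β := by
  ext b (x : b.unop ⟶ a)
  have hx : coyonedaEquiv.symm x = coyoneda.map x.op := by
    rw [Equiv.symm_apply_eq, coyonedaEquiv_coyoneda_map]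
  dsimp [yonedaToCoyonedaCompEvaluation, evaluationDesc]
  rw [hx]
  simpa using (β.naturality_apply x.op (𝟙 a)).symm

lemma eq_evaluationDesc {β : yoneda.obj a ⟶ coyoneda ⋙ H} {γ : (evaluation A (Type v)).obj a ⟶ H}
    (hγ : yonedaToCoyonedaCompEvaluation a ≫ Functor.whiskerLeft coyoneda γ = β) :
    γ = evaluationDesc β := by
  ext M x
  have hγ₁ : γ.app (coyoneda.obj (op a)) (𝟙 a) = β.app (op a) (𝟙 a) := by
    simpa [yonedaToCoyonedaCompEvaluation] using
      ConcreteCategory.congr_hom (congr_app hγ (op a)) (𝟙 a)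
  simpa [evaluationDesc, ← hγ₁] using γ.naturality_apply (coyonedaEquiv.symm x) (𝟙 a)

instance : ((evaluation A (Type v)).obj a).IsLeftKanExtension (yonedaToCoyonedaCompEvaluation a) :=
  ⟨⟨IsInitial.ofUniqueHom
    (fun Y => StructuredArrow.homMk (evaluationDesc Y.hom)
      (yonedaToCoyonedaCompEvaluation_comp_evaluationDesc Y.hom))
    (fun _ φ => StructuredArrow.hom_ext _ _ (eq_evaluationDesc (StructuredArrow.w φ)))⟩⟩

lemma preservesLimits_of_isLeftKanExtension_yoneda (β : yoneda.obj a ⟶ coyoneda ⋙ H)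
    [H.IsLeftKanExtension β] : PreservesLimits H :=
  preservesLimits_of_natIso <| Functor.leftKanExtensionUnique _
    (yonedaToCoyonedaCompEvaluation a) H β

end

instance preservesLimits_lan_obj_yoneda {A : Type u} [SmallCategory A] (a : A) :
    PreservesLimits (coyoneda.lan.obj (yoneda.obj a)) :=
  preservesLimits_of_isLeftKanExtension_yoneda (coyoneda.lanUnit.app (yoneda.obj a))

lemma preservesFiniteLimits_colimit_of_isFiltered {D : Type*} [Category D] {I : Type u}
    [SmallCategory I] [IsFiltered I] (P : I ⥤ D ⥤ Type u)
    (hP : ∀ i, PreservesFiniteLimits (P.obj i)) :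
    PreservesFiniteLimits (colimit P) := by
  have : PreservesFiniteLimits P.flip := by
    refine ⟨fun J _ _ => preservesLimitsOfShape_of_evaluation _ _ fun i => ?_⟩
    have := hP i
    exact preservesLimitsOfShape_of_natIso (flipCompEvaluation P i).symm
  exact preservesFiniteLimits_of_natIso (colimitIsoFlipCompColim P).symm

lemma preservesFiniteLimits_lan_obj_colimit {C D : Type*} [Category C] [Category D] (K : C ⥤ D)
    [∀ P : C ⥤ Type u, K.HasLeftKanExtension P] {I : Type u} [SmallCategory I] [IsFiltered I]
    (P : I ⥤ C ⥤ Type u) (hP : ∀ i, PreservesFiniteLimits (K.lan.obj (P.obj i))) :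
    PreservesFiniteLimits (K.lan.obj (colimit P)) :=
  have := (K.lanAdjunction (Type u)).leftAdjoint_preservesColimits
  have := preservesFiniteLimits_colimit_of_isFiltered (P ⋙ K.lan) hP
  preservesFiniteLimits_of_natIso (preservesColimitIso K.lan P).symm

end CategoryTheory

/-- If a presheaf `F` on a small category `A` is a filtered colimit of
representable presheaves, then the left Kan extension of `F` along the contravariant
Yoneda embedding `coyoneda : Aᵒᵖ ⥤ (A ⥤ Type)` preserves finite limits. -/
theorem stmt1 {A : Type} [SmallCategory A] (F : Aᵒᵖ ⥤ Type)
    (I : Type) [SmallCategory I] [IsFiltered I] (D : I ⥤ A)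
    (hF : Nonempty (F ≅ colimit (D ⋙ yoneda)))
    (G : (A ⥤ Type) ⥤ Type) (α : F ⟶ coyoneda ⋙ G) [G.IsLeftKanExtension α] :
    Nonempty (PreservesFiniteLimits G) := by
  obtain ⟨e⟩ := hF
  have hrep (i : I) : PreservesFiniteLimits (coyoneda.lan.obj ((D ⋙ yoneda).obj i)) :=
    inferInstanceAs (PreservesFiniteLimits (coyoneda.lan.obj (yoneda.obj (D.obj i))))
  have := preservesFiniteLimits_lan_obj_colimit coyoneda (D ⋙ yoneda) hrep
  exact ⟨preservesFiniteLimits_of_natIso (F := coyoneda.lan.obj (colimit (D ⋙ yoneda)))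
    (Functor.leftKanExtensionUniqueOfIso G α e _ (coyoneda.lanUnit.app _)).symm⟩
end

section
/- Let A be a small category and F : Aᵒᵖ ⥤ Type a presheaf. If the left Kan extension of F along the contravariant Yoneda embedding preserves finite limits, then the category of elements of F is filtered. -/
/-! For a finite diagram `j ↦ (c_j, x_j)` in the category of elements, the elements `α x_j` of
`G (L c_j)` form a section of `G` over the diagram `j ↦ L c_j`. Since `G` preserves its limit, they
come from a single element of `G (lim_j L c_j)`, which, `G` being a pointwise left Kan extension,
has the form `G g (α y)` for some `g : L c ⟶ lim_j L c_j` and `y ∈ F c`. Full faithfulness of `L`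
turns `g` into a cone `c ⟶ c_j`, and since `α` is invertible at every object (again because `L`
is fully faithful), this cone carries `y` to the `x_j`: it is a cone over the diagram in the
category of elements. -/

open CategoryTheory Limits

namespace CategoryTheory

open CategoryTheory.Functor

universe w

section

variable {C D J : Type*} [Category C] [Category D] [Category J]

def Functor.FullyFaithful.preimageCone {L : C ⥤ D} (hL : L.FullyFaithful) {K : J ⥤ C}
    (s : Cone (K ⋙ L)) {c : C} (g : L.obj c ⟶ s.pt) : Cone K where
  pt := c
  π :=
    { app := fun j => hL.preimage (g ≫ s.π.app j)
      naturality := fun j j' φ => hL.map_injective (by simpa using (g ≫= s.w φ).symm) }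

@[simp]
lemma Functor.FullyFaithful.map_preimageCone_π_app {L : C ⥤ D} (hL : L.FullyFaithful)
    {K : J ⥤ C} (s : Cone (K ⋙ L)) {c : C} (g : L.obj c ⟶ s.pt) (j : J) :
    L.map ((hL.preimageCone s g).π.app j) = g ≫ s.π.app j :=
  hL.map_preimage _

def CategoryOfElements.liftCone {F : C ⥤ Type w} {H : J ⥤ F.Elements}
    (s : Cone (H ⋙ CategoryOfElements.π F)) (y : F.obj s.pt)
    (hy : ∀ j, F.map (s.π.app j) y = (H.obj j).2) : Cone H where
  pt := ⟨s.pt, y⟩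
  π :=
    { app := fun j => ⟨s.π.app j, hy j⟩
      naturality := fun j j' φ => by
        ext; exact (Category.id_comp _).trans (s.w φ).symm }

lemma CategoryOfElements.app_snd_mem_sections {F F' : C ⥤ Type w} (α : F ⟶ F')
    (H : J ⥤ F.Elements) :
    (fun j => α.app _ (H.obj j).2) ∈ (H ⋙ CategoryOfElements.π F ⋙ F').sections := by
  intro j j' φ
  exact (NatTrans.naturality_apply α _ _).symm.trans (congrArg _ (H.map φ).2)

lemma exists_map_limit_π_eq_of_mem_sections {K : J ⥤ D} [HasLimit K] (G : D ⥤ Type w)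
    [PreservesLimit K G] {s : ∀ j, G.obj (K.obj j)} (hs : s ∈ (K ⋙ G).sections) :
    ∃ p : G.obj (limit K), ∀ j, G.map (limit.π K j) p = s j := by
  let hlim := isLimitOfPreserves G (limit.isLimit K)
  exact ⟨(Types.isLimitEquivSections hlim).symm ⟨s, hs⟩,
    Types.isLimitEquivSections_symm_apply hlim ⟨s, hs⟩⟩

end

section

variable {C D : Type*} [Category C] [Category D] {L : C ⥤ D} {F : C ⥤ Type w}
  {G : D ⥤ Type w} {α : F ⟶ L ⋙ G}

lemma Functor.LeftExtension.IsPointwiseLeftKanExtension.exists_map_app_eq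
    (hα : (LeftExtension.mk G α).IsPointwiseLeftKanExtension) {d : D} (p : G.obj d) :
    ∃ (c : C) (g : L.obj c ⟶ d) (y : F.obj c), G.map g (α.app c y) = p := by
  obtain ⟨g, y, hgy⟩ := Types.jointly_surjective _ (hα d) p
  exact ⟨g.left, g.hom, y, hgy⟩

lemma Functor.LeftExtension.IsPointwiseLeftKanExtension.map_eq_of_map_app_eq
    (hα : (LeftExtension.mk G α).IsPointwiseLeftKanExtension) [L.Full] [L.Faithful]
    {c c' : C} (f : c ⟶ c') {y : F.obj c} {x : F.obj c'}
    (h : G.map (L.map f) (α.app c y) = α.app c' x) : F.map f y = x := by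
  have hinj : Function.Injective (α.app c') :=
    ((isIso_iff_bijective _).mp (hα (L.obj c')).isIso_hom_app).1
  exact hinj ((NatTrans.naturality_apply α f y).trans h)

theorem isCofiltered_elements_of_isPointwiseLeftKanExtension [HasFiniteLimits D]
    [L.Full] [L.Faithful] [PreservesFiniteLimits G]
    (hα : (LeftExtension.mk G α).IsPointwiseLeftKanExtension) : IsCofiltered F.Elements := by
  refine IsCofiltered.of_cone_nonempty.{0} _ fun {J} _ _ H => ?_
  let K := H ⋙ CategoryOfElements.π F ⋙ L
  obtain ⟨p, hp⟩ := exists_map_limit_π_eq_of_mem_sections (K := K) G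
    (CategoryOfElements.app_snd_mem_sections α H)
  obtain ⟨c, g, y, rfl⟩ := hα.exists_map_app_eq p
  let s := (FullyFaithful.ofFullyFaithful L).preimageCone
    (K := H ⋙ CategoryOfElements.π F) (limit.cone K) g
  refine ⟨CategoryOfElements.liftCone s y fun j => hα.map_eq_of_map_app_eq _ ?_⟩
  rw [FullyFaithful.map_preimageCone_π_app]
  exact (G.map_comp_apply g (limit.π K j) _).trans (hp j)

end

end CategoryTheory

/-- If the left Kan extension of a presheaf `F : Aᵒᵖ ⥤ Type` along the
contravariant Yoneda embedding preserves finite limits, then the category of elements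
of `F` (the category of representables over `F`) is filtered. -/
theorem stmt2 {A : Type} [SmallCategory A] (F : Aᵒᵖ ⥤ Type)
    (G : (A ⥤ Type) ⥤ Type) (α : F ⟶ coyoneda ⋙ G) [G.IsLeftKanExtension α]
    (hG : PreservesFiniteLimits G) :
    IsFiltered (CostructuredArrow yoneda F) := by
  have : IsCofiltered F.Elements := isCofiltered_elements_of_isPointwiseLeftKanExtension
    (Functor.isPointwiseLeftKanExtensionOfIsLeftKanExtension G α)
  exact IsFiltered.of_equivalence (CategoryOfElements.costructuredArrowYonedaEquivalence F)
end

section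
/- Let A be a small category with pullbacks carrying a Grothendieck topology, and let {u_i → x} be a family of morphisms generating a covering sieve of x, with S the sieve generated. Let U_• : Δᵒᵖ ⥤ (Aᵒᵖ ⥤ Type) be the Čech nerve of the map ∐ yoneda(u_i) → yoneda(x). Then a presheaf F : Aᵒᵖ ⥤ Type satisfies the sheaf condition with respect to S if and only if the canonical map F(x) → lim_{Δ} Hom(U_•, F) is a bijection. -/
/-!
The sieve `S`, viewed as a subpresheaf of `yoneda x`, is the image of
`p : ∐ yoneda (u i) ⟶ yoneda x`: the map `p` factors as an epimorphism `q : ∐ yoneda (u i) ⟶ S`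
followed by the mono `S ⟶ yoneda x`. An element of `lim_Δ Hom(U_•, F)` is determined by its
component `s₀ : U₀ ⟶ F`, and `s₀` agrees on any two maps to `U₀` with the same image in
`yoneda x` because these are the two vertices of a single map to `U₁`. Since `S ⟶ yoneda x` is
mono, this says that `s₀` coequalizes the kernel pair of `U₀ ⟶ S`; epimorphisms of presheaves
are effective, so `s₀` descends uniquely to `S`. Thus `lim_Δ Hom(U_•, F) ≅ Hom(S, F)`, and the
canonical map `F(x) ⟶ lim_Δ Hom(U_•, F)` is `F(x) ≅ Hom(yoneda x, F) ⟶ Hom(S, F)` followed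
by this bijection.
-/

open CategoryTheory Limits

noncomputable section

variable {A : Type} [SmallCategory A] {x : A} {ι : Type} (u : ι → A) (f : ∀ i, u i ⟶ x)

/-- The canonical map `∐ yoneda (u i) ⟶ yoneda x` induced by a family of morphisms
`f i : u i ⟶ x`, as an arrow in the presheaf category. -/
def familyArrow : Arrow (Aᵒᵖ ⥤ Type) :=
  Arrow.mk (Sigma.desc fun i => yoneda.map (f i))

/-- The Čech nerve `U_•` of the map `∐ yoneda (u i) ⟶ yoneda x`. -/
def cechU : SimplicialObject (Aᵒᵖ ⥤ Type) := (familyArrow u f).cechNerve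

/-- The cone over the cosimplicial type `[n] ↦ Hom(U_n, F)` whose point is `F(x)`,
with legs given by the Čech augmentation `U_n ⟶ yoneda x` followed by the element
`y : F(x)` viewed as a map `yoneda x ⟶ F` via the Yoneda lemma. -/
def cechCone (F : Aᵒᵖ ⥤ Type) :
    Cone ((cechU u f).rightOp ⋙ yoneda.obj F) where
  pt := F.obj (Opposite.op x)
  π :=
    { app := fun n => TypeCat.ofHom fun y =>
        (familyArrow u f).augmentedCechNerve.hom.app (Opposite.op n) ≫ yonedaEquiv.symm y
      naturality := fun n n' θ => by
        ext y
        dsimp [cechU]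
        erw [← Category.assoc]
        congr 1
        exact (WidePullback.lift_base _ _ _ _).symm }

universe v₁ u₁

open Simplicial

namespace CategoryTheory.Arrow

variable {C : Type u₁} [Category.{v₁} C] (p : Arrow C)
  [∀ n : ℕ, HasWidePullback.{0} p.right (fun _ : Fin (n + 1) => p.left) fun _ => p.hom]

instance isSplitEpi_cechNerve_zero_π :
    IsSplitEpi (WidePullback.π (fun _ : Fin 1 => p.hom) 0) :=
  ⟨⟨WidePullback.lift p.hom (fun _ => 𝟙 _) (by simp), WidePullback.lift_π _ _ _ _ _⟩⟩

lemma exists_cechNerve_one_of_comp_base_eq {Z : C}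
    (a b : Z ⟶ p.cechNerve.obj (Opposite.op ⦋0⦌))
    (h : a ≫ WidePullback.base _ = b ≫ WidePullback.base _) :
    ∃ w : Z ⟶ p.cechNerve.obj (Opposite.op ⦋1⦌),
      w ≫ p.cechNerve.map (SimplexCategory.const ⦋0⦌ ⦋1⦌ 0).op = a ∧
      w ≫ p.cechNerve.map (SimplexCategory.const ⦋0⦌ ⦋1⦌ 1).op = b := by
  refine ⟨WidePullback.lift (a ≫ WidePullback.base _)
    ![a ≫ WidePullback.π _ 0, b ≫ WidePullback.π _ 0] ?_, ?_, ?_⟩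
  · intro j
    fin_cases j <;> simp [h]
  all_goals
    apply WidePullback.hom_ext
    · intro j
      fin_cases j
      erw [Category.assoc, WidePullback.lift_π, WidePullback.lift_π]
      rfl
    · erw [Category.assoc, WidePullback.lift_base, WidePullback.lift_base, h]

section Descent

variable {F : C}

lemma cechNerve_map_comp_limit_π (s : limit (p.cechNerve.rightOp ⋙ yoneda.obj F))
    {m n : SimplexCategory} (θ : m ⟶ n) :
    p.cechNerve.map θ.op ≫ limit.π (p.cechNerve.rightOp ⋙ yoneda.obj F) m s =
      limit.π (p.cechNerve.rightOp ⋙ yoneda.obj F) n s :=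
  types_congr_hom (limit.w _ θ) s

lemma cechNerve_limit_ext {s t : limit (p.cechNerve.rightOp ⋙ yoneda.obj F)}
    (h : limit.π (p.cechNerve.rightOp ⋙ yoneda.obj F) ⦋0⦌ s =
      limit.π (p.cechNerve.rightOp ⋙ yoneda.obj F) ⦋0⦌ t) : s = t :=
  Types.limit_ext _ _ _ fun n => by
    rw [← cechNerve_map_comp_limit_π p s (SimplexCategory.const ⦋0⦌ n 0),
      ← cechNerve_map_comp_limit_π p t (SimplexCategory.const ⦋0⦌ n 0), h]

lemma comp_limit_π_zero_eq_of_comp_base_eq (s : limit (p.cechNerve.rightOp ⋙ yoneda.obj F))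
    {Z : C} (a b : Z ⟶ p.cechNerve.obj (Opposite.op ⦋0⦌))
    (h : a ≫ WidePullback.base _ = b ≫ WidePullback.base _) :
    a ≫ limit.π (p.cechNerve.rightOp ⋙ yoneda.obj F) ⦋0⦌ s =
      b ≫ limit.π (p.cechNerve.rightOp ⋙ yoneda.obj F) ⦋0⦌ s := by
  obtain ⟨w, rfl, rfl⟩ := p.exists_cechNerve_one_of_comp_base_eq a b h
  simp only [Category.assoc, cechNerve_map_comp_limit_π]

end Descent

variable {S : C} (q : p.left ⟶ S) {i : S ⟶ p.right}

lemma cechNerve_π_comp_factor (hqi : q ≫ i = p.hom) {n : ℕ} (j : Fin (n + 1)) :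
    WidePullback.π (fun _ : Fin (n + 1) => p.hom) j ≫ q ≫ i = WidePullback.base _ := by
  rw [hqi, WidePullback.π_arrow]

lemma cechNerve_π_comp_eq [Mono i] (hqi : q ≫ i = p.hom) {n : ℕ} (j k : Fin (n + 1)) :
    WidePullback.π (fun _ : Fin (n + 1) => p.hom) j ≫ q =
      WidePullback.π (fun _ : Fin (n + 1) => p.hom) k ≫ q := by
  rw [← cancel_mono i, Category.assoc, Category.assoc, cechNerve_π_comp_factor p q hqi,
    cechNerve_π_comp_factor p q hqi]

def cechNerveConeOfFactor [Mono i] (hqi : q ≫ i = p.hom) (F : C) :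
    Cone (p.cechNerve.rightOp ⋙ yoneda.obj F) where
  pt := S ⟶ F
  π :=
    { app := fun n => TypeCat.ofHom fun h => WidePullback.π _ 0 ≫ q ≫ h
      naturality := fun n n' θ => by
        ext h
        change WidePullback.π _ 0 ≫ q ≫ h = p.cechNerve.map θ.op ≫ WidePullback.π _ 0 ≫ q ≫ h
        erw [← Category.assoc (p.cechNerve.map θ.op), WidePullback.lift_π, ← Category.assoc,
          ← Category.assoc, p.cechNerve_π_comp_eq q hqi] }

theorem bijective_lift_cechNerveConeOfFactor [Mono i] [EffectiveEpi q] (hqi : q ≫ i = p.hom)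
    (F : C) : Function.Bijective (limit.lift _ (p.cechNerveConeOfFactor q hqi F)) := by
  have lift_π_zero (h : S ⟶ F) : limit.π (p.cechNerve.rightOp ⋙ yoneda.obj F) ⦋0⦌
      (limit.lift _ (p.cechNerveConeOfFactor q hqi F) h) = WidePullback.π _ 0 ≫ q ≫ h :=
    types_congr_hom (limit.lift_π (p.cechNerveConeOfFactor q hqi F) ⦋0⦌) h
  constructor
  · intro (h : S ⟶ F) (h' : S ⟶ F) hh
    have := congrArg (limit.π (p.cechNerve.rightOp ⋙ yoneda.obj F) ⦋0⦌) hh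
    rw [lift_π_zero, lift_π_zero] at this
    exact (cancel_epi (WidePullback.π (fun _ : Fin 1 => p.hom) 0 ≫ q)).1
      (by simpa only [Category.assoc] using this)
  · intro s
    refine ⟨EffectiveEpi.desc (WidePullback.π (fun _ : Fin 1 => p.hom) 0 ≫ q)
      (limit.π (p.cechNerve.rightOp ⋙ yoneda.obj F) ⦋0⦌ s) fun a b hab => ?_,
      p.cechNerve_limit_ext ?_⟩
    · refine p.comp_limit_π_zero_eq_of_comp_base_eq s a b ?_
      simpa only [Category.assoc, cechNerve_π_comp_factor p q hqi] using hab =≫ i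
    · exact (lift_π_zero _).trans (by rw [← Category.assoc, EffectiveEpi.fac])

end CategoryTheory.Arrow

namespace CategoryTheory.Sieve

variable {C : Type u₁} [Category.{v₁} C] {X : C} {ι : Type v₁} (Z : ι → C) (g : ∀ i, Z i ⟶ X)

def sigmaToGenerateOfArrows :
    ∐ (fun i => yoneda.obj (Z i)) ⟶ (generate (Presieve.ofArrows Z g)).functor :=
  Limits.Sigma.desc fun i => toFunctor _ (g i) (le_generate _ _ _ (Presieve.ofArrows.mk i))

lemma sigmaToGenerateOfArrows_functorInclusion :
    sigmaToGenerateOfArrows Z g ≫ (generate (Presieve.ofArrows Z g)).functorInclusion =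
      Limits.Sigma.desc fun i => yoneda.map (g i) := by
  ext1 i
  rw [sigmaToGenerateOfArrows, Limits.Sigma.ι_desc_assoc, Limits.Sigma.ι_desc]
  rfl

instance epi_sigmaToGenerateOfArrows : Epi (sigmaToGenerateOfArrows Z g) := by
  refine @NatTrans.epi_of_epi_app _ _ _ _ _ _ _ fun a => (epi_iff_surjective _).2 ?_
  rintro ⟨_, _, k, _, ⟨i⟩, rfl⟩
  refine ⟨(Limits.Sigma.ι (fun i => yoneda.obj (Z i)) i).app a k, ?_⟩
  change ((Limits.Sigma.ι _ i ≫ sigmaToGenerateOfArrows Z g).app a) k = _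
  rw [sigmaToGenerateOfArrows, Limits.Sigma.ι_desc]
  rfl

instance effectiveEpi_sigmaToGenerateOfArrows : EffectiveEpi (sigmaToGenerateOfArrows Z g) :=
  have := IsRegularEpiCategory.regularEpiOfEpi (sigmaToGenerateOfArrows Z g)
  inferInstance

end CategoryTheory.Sieve

theorem stmt13 (F : Aᵒᵖ ⥤ Type) :
    Function.Bijective (fun g : yoneda.obj x ⟶ F =>
        (Sieve.generate (Presieve.ofArrows u f)).functorInclusion ≫ g) ↔
      Function.Bijective
        (limit.lift ((cechU u f).rightOp ⋙ yoneda.obj F) (cechCone u f F)) := by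
  have hqi := Sieve.sigmaToGenerateOfArrows_functorInclusion u f
  -- `familyArrow` is not reducible, so instance search does not see through its source and target.
  have : Mono (Y := (familyArrow u f).right)
      (Sieve.generate (Presieve.ofArrows u f)).functorInclusion :=
    Sieve.functorInclusion_is_mono
  have : EffectiveEpi (Y := (familyArrow u f).left) (Sieve.sigmaToGenerateOfArrows u f) :=
    inferInstanceAs (EffectiveEpi (Sieve.sigmaToGenerateOfArrows u f))
  have lift_eq : ⇑(limit.lift _ (cechCone u f F)) =
      limit.lift _ ((familyArrow u f).cechNerveConeOfFactor _ hqi F) ∘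
        (fun g => (Sieve.generate (Presieve.ofArrows u f)).functorInclusion ≫ g) ∘
          yonedaEquiv.symm := by
    funext y
    refine Types.limit_ext _ _ _ fun n => (types_congr_hom (limit.lift_π _ n) y).trans
      (Eq.trans ?_ (types_congr_hom (limit.lift_π _ n) _).symm)
    exact ((familyArrow u f).cechNerve_π_comp_factor _ hqi 0 =≫ yonedaEquiv.symm y).symm
  rw [lift_eq]
  exact ((Function.Bijective.of_comp_iff'
    ((familyArrow u f).bijective_lift_cechNerveConeOfFactor _ hqi F) _).trans
      (Function.Bijective.of_comp_iff _ yonedaEquiv.symm.bijective)).symm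

end
end

section
/- Let A and B be small categories, and let 𝔸 and 𝔹 be sets of cones in A and B respectively. Define the product sketch on A × B whose cones are the cones of 𝔸 paired with each object of B (constant in the B coordinate) together with the cones of 𝔹 paired with each object of A. Then the category of models of the product sketch in Type is equivalent to the category of models of (A, 𝔸) valued in the category of models of (B, 𝔹). -/
/-!
Currying identifies functors `A × B ⥤ Type` with functors `A ⥤ (B ⥤ Type)`. Under this
identification the cones of `𝔹` paired with the objects of `A` say exactly that every slice
`b ↦ F (a, b)` is a model of `(B, 𝔹)`, so such `F` are functors `A ⥤ Mod(B, 𝔹)`. The cones of `𝔸`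
paired with the objects of `B` say that the cones of `𝔸` go to limits after evaluation at every
`b`. Since limits commute with limits, models of `(B, 𝔹)` are closed under limits in `B ⥤ Type`,
so limits in `Mod(B, 𝔹)` are computed pointwise and this is the same as `A ⥤ Mod(B, 𝔹)` sending
the cones of `𝔸` to limits.
-/

open CategoryTheory Limits

/-- A cone in a small category `A`: a small index category, a diagram and a cone. -/
structure SketchCone (A : Type) [SmallCategory A] where
  K : Type
  [instK : SmallCategory K]
  D : K ⥤ A
  c : Cone D

attribute [instance] SketchCone.instK

variable {A B : Type} [SmallCategory A] [SmallCategory B]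

/-- The functor `a ↦ (a, b)`, constant in the second coordinate. -/
def withB (b : B) : A ⥤ A × B := (Functor.id A).prod' ((Functor.const A).obj b)

/-- The functor `b ↦ (a, b)`, constant in the first coordinate. -/
def withA (a : A) : B ⥤ A × B := ((Functor.const B).obj a).prod' (Functor.id B)

/-- A model in `Type` of the product sketch on `A × B`: the cones of `𝔸` paired with
each object of `B`, together with the cones of `𝔹` paired with each object of `A`,
all go to limit cones. -/
def IsProdModel (SA : Set (SketchCone A)) (SB : Set (SketchCone B))
    (F : A × B ⥤ Type) : Prop :=
  (∀ σ ∈ SA, ∀ b : B,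
      Nonempty (IsLimit (F.mapCone ((withB (A := A) b).mapCone σ.c)))) ∧
  (∀ τ ∈ SB, ∀ a : A,
      Nonempty (IsLimit (F.mapCone ((withA (B := B) a).mapCone τ.c))))

/-- The category of models of the sketch `(B, 𝔹)` in `Type`. -/
def ModCat (SB : Set (SketchCone B)) : Type 1 :=
  ObjectProperty.FullSubcategory (fun G : B ⥤ Type => ∀ τ ∈ SB, Nonempty (IsLimit (G.mapCone τ.c)))

instance (SB : Set (SketchCone B)) : Category (ModCat SB) :=
  ObjectProperty.FullSubcategory.category _

open Functor

namespace CategoryTheory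

section

variable {J K E C D : Type*} [Category* J] [Category* K] [Category* E] [Category* C]
  [Category* D]

lemma NatTrans.isIso_app_of_isLimit {P Q : D ⥤ C} (α : P ⟶ Q) {G : J ⥤ D} {c : Cone G}
    (hP : IsLimit (P.mapCone c)) (hQ : IsLimit (Q.mapCone c)) [∀ j, IsIso (α.app (G.obj j))] :
    IsIso (α.app c.pt) := by
  have : ∀ j, IsIso ((whiskerLeft G α).app j) := fun j => inferInstanceAs (IsIso (α.app _))
  have := NatIso.isIso_of_isIso_app (whiskerLeft G α)
  have : α.app c.pt = (hP.conePointsIsoOfNatIso hQ (asIso (whiskerLeft G α))).hom :=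
    hQ.hom_ext fun j => by
      rw [IsLimit.conePointsIsoOfNatIso_hom_comp]
      simp
  rw [this]
  infer_instance

namespace Limits

noncomputable def coneComparison [HasLimitsOfShape K C] {F : K ⥤ E} (t : Cone F) :
    (evaluation E C).obj t.pt ⟶ (whiskeringLeft K E C).obj F ⋙ lim where
  app G := limit.lift (F ⋙ G) (G.mapCone t)

lemma nonempty_isLimit_mapCone_iff_isIso_coneComparison [HasLimitsOfShape K C] {F : K ⥤ E}
    (t : Cone F) (G : E ⥤ C) :
    Nonempty (IsLimit (G.mapCone t)) ↔ IsIso ((coneComparison t).app G) :=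
  (limit.isLimit _).nonempty_isLimit_iff_isIso_lift

/-- Both the source and the target of `coneComparison t` preserve limits, so its components
at limits of objects where it is invertible are invertible. -/
instance isClosedUnderLimitsOfShape_isLimit_mapCone [HasLimitsOfShape K C]
    [HasLimitsOfShape J C] {F : K ⥤ E} (t : Cone F) :
    ObjectProperty.IsClosedUnderLimitsOfShape
      (fun G : E ⥤ C => Nonempty (IsLimit (G.mapCone t))) J where
  limitsOfShape_le G := fun ⟨h⟩ => by
    have := fun j =>
      (nonempty_isLimit_mapCone_iff_isIso_coneComparison t _).1 (h.prop_diag_obj j)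
    refine (nonempty_isLimit_mapCone_iff_isIso_coneComparison t G).2 ?_
    exact NatTrans.isIso_app_of_isLimit _ (isLimitOfPreserves _ h.isLimit)
      (isLimitOfPreserves _ h.isLimit)

lemma nonempty_isLimit_iff_forall_evaluation [HasLimitsOfShape J C] {F : J ⥤ E ⥤ C}
    (c : Cone F) :
    Nonempty (IsLimit c) ↔ ∀ e, Nonempty (IsLimit (((evaluation E C).obj e).mapCone c)) :=
  ⟨fun ⟨h⟩ _ => ⟨isLimitOfPreserves _ h⟩,
    fun h => ⟨evaluationJointlyReflectsLimits c fun e => (h e).some⟩⟩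

end Limits

lemma ObjectProperty.nonempty_isLimit_iff_ι_mapCone (P : ObjectProperty C)
    [P.IsClosedUnderLimitsOfShape J] [HasLimitsOfShape J C] {F : J ⥤ P.FullSubcategory}
    (c : Cone F) : Nonempty (IsLimit c) ↔ Nonempty (IsLimit (P.ι.mapCone c)) :=
  ⟨fun ⟨h⟩ => ⟨isLimitOfPreserves _ h⟩, fun ⟨h⟩ => ⟨isLimitOfReflects _ h⟩⟩

noncomputable def Functor.fullSubcategoryEquivalence (Φ : C ⥤ D) [Φ.Full] [Φ.Faithful]
    {P : ObjectProperty C} {Q : ObjectProperty D} [Q.IsClosedUnderIsomorphisms]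
    (h : Q.inverseImage Φ = P) (hQ : Q ≤ Φ.essImage) :
    P.FullSubcategory ≌ Q.FullSubcategory :=
  letI Ψ := Q.lift (P.ι ⋙ Φ) fun X => h ▸ X.2
  haveI : Ψ.EssSurj := ⟨fun Y => by
    obtain ⟨X, ⟨e⟩⟩ := hQ _ Y.2
    exact ⟨⟨X, h ▸ Q.prop_of_iso e.symm Y.2⟩, ⟨Q.isoMk e⟩⟩⟩
  haveI : Ψ.IsEquivalence := { }
  Ψ.asEquivalence

end

end CategoryTheory

section

variable {C : Type*} [Category* C]

def withBCompUncurryIso (G : A ⥤ B ⥤ C) (b : B) :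
    withB b ⋙ uncurry.obj G ≅ G ⋙ (evaluation B C).obj b :=
  NatIso.ofComponents (fun _ => Iso.refl _) (by simp [withB])

def withACompUncurryIso (G : A ⥤ B ⥤ C) (a : A) : withA a ⋙ uncurry.obj G ≅ G.obj a :=
  NatIso.ofComponents (fun _ => Iso.refl _) (by simp [withA])

end

/-- `ModCat S` is by definition `(IsModel S).FullSubcategory`. -/
abbrev IsModel (S : Set (SketchCone B)) : ObjectProperty (B ⥤ Type) :=
  fun G => ∀ τ ∈ S, Nonempty (IsLimit (G.mapCone τ.c))

instance (S : Set (SketchCone B)) (J : Type) [SmallCategory J] :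
    (IsModel S).IsClosedUnderLimitsOfShape J where
  limitsOfShape_le _ := fun ⟨h⟩ τ hτ =>
    ObjectProperty.prop_of_isLimit (fun G : B ⥤ Type => Nonempty (IsLimit (G.mapCone τ.c)))
      h.isLimit fun j => h.prop_diag_obj j τ hτ

instance (SA : Set (SketchCone A)) (SB : Set (SketchCone B)) :
    ObjectProperty.IsClosedUnderIsomorphisms (IsProdModel SA SB) where
  of_iso e := fun ⟨hA, hB⟩ =>
    ⟨fun σ hσ b => (hA σ hσ b).map (IsLimit.mapConeEquiv e),
      fun τ hτ a => (hB τ hτ a).map (IsLimit.mapConeEquiv e)⟩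

lemma isProdModel_uncurry_iff (SA : Set (SketchCone A)) (SB : Set (SketchCone B))
    (G : A ⥤ B ⥤ Type) :
    IsProdModel SA SB (uncurry.obj G) ↔
      (∀ σ ∈ SA, ∀ b, Nonempty (IsLimit ((G ⋙ (evaluation B Type).obj b).mapCone σ.c))) ∧
        ∀ a, IsModel SB (G.obj a) := by
  refine and_congr (forall₂_congr fun σ _ => forall_congr' fun b => ?_)
    ⟨fun h a τ hτ => (h τ hτ a).map (IsLimit.mapConeEquiv (withACompUncurryIso G a)),
      fun h τ hτ a => (h a τ hτ).map (IsLimit.mapConeEquiv (withACompUncurryIso G a).symm)⟩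
  exact ⟨Nonempty.map (IsLimit.mapConeEquiv (withBCompUncurryIso G b)),
    Nonempty.map (IsLimit.mapConeEquiv (withBCompUncurryIso G b).symm)⟩

def uncurryModCat (SB : Set (SketchCone B)) : (A ⥤ ModCat SB) ⥤ (A × B ⥤ Type) :=
  (whiskeringRight A _ _).obj (IsModel SB).ι ⋙ uncurry

def fullyFaithfulUncurryModCat (SB : Set (SketchCone B)) :
    (uncurryModCat (A := A) SB).FullyFaithful :=
  ((IsModel SB).fullyFaithfulι.whiskeringRight A).comp currying.fullyFaithfulFunctor

instance (SB : Set (SketchCone B)) : (uncurryModCat (A := A) SB).Full :=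
  (fullyFaithfulUncurryModCat SB).full

instance (SB : Set (SketchCone B)) : (uncurryModCat (A := A) SB).Faithful :=
  (fullyFaithfulUncurryModCat SB).faithful

lemma nonempty_isLimit_mapCone_iff_forall_evaluation {SB : Set (SketchCone B)}
    (H : A ⥤ ModCat SB) (σ : SketchCone A) :
    Nonempty (IsLimit (H.mapCone σ.c)) ↔
      ∀ b, Nonempty (IsLimit (((H ⋙ (IsModel SB).ι) ⋙ (evaluation B Type).obj b).mapCone σ.c)) :=
  ((IsModel SB).nonempty_isLimit_iff_ι_mapCone _).trans (nonempty_isLimit_iff_forall_evaluation _)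

lemma isProdModel_uncurryModCat_iff (SA : Set (SketchCone A)) (SB : Set (SketchCone B))
    (H : A ⥤ ModCat SB) :
    IsProdModel SA SB ((uncurryModCat SB).obj H) ↔
      ∀ σ ∈ SA, Nonempty (IsLimit (H.mapCone σ.c)) := by
  simp only [nonempty_isLimit_mapCone_iff_forall_evaluation]
  exact (isProdModel_uncurry_iff SA SB _).trans (and_iff_left fun a => (H.obj a).2)

lemma isProdModel_le_essImage (SA : Set (SketchCone A)) (SB : Set (SketchCone B)) :
    IsProdModel SA SB ≤ (uncurryModCat SB).essImage := fun F hF => by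
  have hslices := ((isProdModel_uncurry_iff SA SB (curry.obj F)).1
    (ObjectProperty.prop_of_iso _ (currying.counitIso.app F).symm hF)).2
  exact ⟨(IsModel SB).lift (curry.obj F) hslices, ⟨currying.counitIso.app F⟩⟩

/-- the category of models of the product sketch in `Type` is equivalent
to the category of models of `(A, 𝔸)` valued in the category of models of `(B, 𝔹)`. -/
theorem stmt14 (SA : Set (SketchCone A)) (SB : Set (SketchCone B)) :
    Nonempty (ObjectProperty.FullSubcategory (IsProdModel SA SB) ≌
      ObjectProperty.FullSubcategory (fun H : A ⥤ ModCat SB =>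
        ∀ σ ∈ SA, Nonempty (IsLimit (H.mapCone σ.c)))) :=
  ⟨((uncurryModCat SB).fullSubcategoryEquivalence
    (by ext H; exact isProdModel_uncurryModCat_iff SA SB H)
    (isProdModel_le_essImage SA SB)).symm⟩
end

section
/- Let A be a small category. Then a presheaf F : Aᵒᵖ ⥤ Type lies in the essential image of the Yoneda embedding composed with filtered colimits (i.e., is a filtered colimit of representables) if and only if F, viewed via its left Kan extension Lan F : (A ⥤ Type) ⥤ Type along the contravariant Yoneda embedding, preserves finite limits of corepresentable functors (i.e., preserves limits of finite diagrams K ⥤ Aᵒᵖ composed with the contravariant Yoneda embedding). -/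
/-!
The left Kan extension of `F` along `coyoneda` is the functor tensor product
`X ↦ F ⊗ X = colim_{(a, y) ∈ El F} X a`, where `El F = CostructuredArrow yoneda F` is the category
of elements of `F`. If `El F` is filtered, `F ⊗ -` preserves all finite limits, because filtered
colimits commute with finite limits in `Type`. Conversely, let `B` be a finite diagram in `El F`
with underlying objects `a_j` and elements `y_j ∈ F a_j`. Since `F ⊗ Hom(a, -) ≅ F a`, the family
`(y_j)` is an element of `lim_j F ⊗ Hom(a_j, -)`; if `F ⊗ -` preserves this limit, it lifts to
`F ⊗ lim_j Hom(a_j, -)`, and any representative `(e, (a_j ⟶ e)_j)` of the lift is a cocone over `B`.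
Finally, for small `A` a presheaf is a filtered colimit of representables exactly when its category
of elements is filtered.
-/

open CategoryTheory Limits Opposite Functor

universe v u

namespace CategoryTheory.Presheaf

variable {A : Type u} [SmallCategory A] (F : Aᵒᵖ ⥤ Type u)

/-- The functor tensor product `F ⊗ X = ∫^a F a × X a`, modelled as the colimit of `X` over the
category of elements of `F`. -/
noncomputable def tensor : (A ⥤ Type u) ⥤ Type u :=
  (whiskeringLeft _ _ _).obj (CostructuredArrow.proj yoneda F) ⋙ colim

namespace tensor

variable {F} {X : A ⥤ Type u}

noncomputable def mk (e : CostructuredArrow yoneda F) (x : X.obj e.left) : (tensor F).obj X :=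
  colimit.ι (CostructuredArrow.proj yoneda F ⋙ X) e x

lemma map_mk {Y : A ⥤ Type u} (φ : X ⟶ Y) (e : CostructuredArrow yoneda F) (x : X.obj e.left) :
    (tensor F).map φ (mk e x) = mk e (φ.app e.left x) :=
  colimit.ι_map_apply _ _ _

lemma mk_map {e e' : CostructuredArrow yoneda F} (φ : e ⟶ e') (x : X.obj e.left) :
    mk e' (X.map φ.left x) = mk e x :=
  colimit.w_apply (CostructuredArrow.proj yoneda F ⋙ X) φ x

lemma exists_eq_mk (z : (tensor F).obj X) :
    ∃ (e : CostructuredArrow yoneda F) (x : X.obj e.left), z = mk e x := by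
  obtain ⟨e, x, rfl⟩ := Types.jointly_surjective' z
  exact ⟨e, x, rfl⟩

lemma hom_ext {T : Type u} {f g : (tensor F).obj X ⟶ T} (h : ∀ e x, f (mk e x) = g (mk e x)) :
    f = g := by
  refine ConcreteCategory.hom_ext _ _ fun z => ?_
  obtain ⟨e, x, rfl⟩ := exists_eq_mk z
  exact h e x

noncomputable def desc {T : Type u} (f : ∀ e, X.obj e.left → T)
    (hf : ∀ {e e' : CostructuredArrow yoneda F} (φ : e ⟶ e') x, f e' (X.map φ.left x) = f e x) :
    (tensor F).obj X ⟶ T :=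
  colimit.desc (CostructuredArrow.proj yoneda F ⋙ X)
    ⟨T, { app e := TypeCat.ofHom (f e), naturality _ _ φ := by ext x; exact hf φ x }⟩

lemma desc_mk {T : Type u} (f : ∀ e, X.obj e.left → T)
    (hf : ∀ {e e' : CostructuredArrow yoneda F} (φ : e ⟶ e') x, f e' (X.map φ.left x) = f e x)
    (e : CostructuredArrow yoneda F) (x : X.obj e.left) :
    desc f hf (mk e x) = f e x :=
  colimit.ι_desc_apply _ _ _

lemma mk_coyoneda {d : Aᵒᵖ} (e : CostructuredArrow yoneda F) (f : d.unop ⟶ e.left) :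
    mk (X := coyoneda.obj d) e f =
      mk (CostructuredArrow.mk (yonedaEquiv.symm (F.map f.op (yonedaEquiv e.hom)))) (𝟙 d.unop) := by
  have w : yoneda.map f ≫ e.hom = yonedaEquiv.symm (F.map f.op (yonedaEquiv e.hom)) := by
    rw [← yonedaEquiv_symm_naturality_left, Equiv.symm_apply_apply]
  refine .trans ?_ (mk_map (X := coyoneda.obj d) (CostructuredArrow.homMk f w :
    CostructuredArrow.mk (yonedaEquiv.symm (F.map f.op (yonedaEquiv e.hom))) ⟶ e) (𝟙 d.unop))
  simp

end tensor

open tensor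

noncomputable def tensorUnit : F ⟶ coyoneda ⋙ tensor F where
  app d := TypeCat.ofHom fun y =>
    mk (X := coyoneda.obj d) (CostructuredArrow.mk (yonedaEquiv.symm y)) (𝟙 d.unop)
  naturality d d' f := by
    ext y
    dsimp
    rw [map_mk, mk_coyoneda (CostructuredArrow.mk (yonedaEquiv.symm y))]
    congr 3
    simp

lemma mk_coyoneda_eq_tensorUnit_app {d : Aᵒᵖ} (e : CostructuredArrow yoneda F)
    (f : d.unop ⟶ e.left) :
    mk (X := coyoneda.obj d) e f = (tensorUnit F).app d (F.map f.op (yonedaEquiv e.hom)) :=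
  mk_coyoneda e f

lemma tensor_map_tensorUnit_app {X : A ⥤ Type u} {b : Aᵒᵖ} (g : coyoneda.obj b ⟶ X)
    (y : F.obj b) :
    (tensor F).map g ((tensorUnit F).app b y) =
      mk (CostructuredArrow.mk (yonedaEquiv.symm y)) (coyonedaEquiv g) :=
  map_mk _ _ _

section

variable {F} {X : A ⥤ Type u} (s : Cocone (CostructuredArrow.proj coyoneda X ⋙ F))

-- The domain is stated as `F.obj b` rather than `(proj ⋙ F).obj (mk g)`, so that rewriting
-- inside the argument stays type-correct.
def legAt {b : Aᵒᵖ} (g : coyoneda.obj b ⟶ X) (y : F.obj b) : s.pt :=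
  s.ι.app (CostructuredArrow.mk g) y

lemma legAt_map {b b' : Aᵒᵖ} (f : b ⟶ b') (g : coyoneda.obj b' ⟶ X) (y : F.obj b) :
    legAt s g (F.map f y) = legAt s (coyoneda.map f ≫ g) y :=
  s.w_apply (CostructuredArrow.homMk f rfl :
    CostructuredArrow.mk (coyoneda.map f ≫ g) ⟶ CostructuredArrow.mk g) y

end

noncomputable def isPointwiseLeftKanExtensionTensorUnit :
    (LeftExtension.mk _ (tensorUnit F)).IsPointwiseLeftKanExtension := fun X =>
  { desc s := desc (fun e x => legAt s (coyonedaEquiv.symm x) (yonedaEquiv e.hom))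
      (fun φ x => by
        rw [coyonedaEquiv_symm_map, ← legAt_map, yonedaEquiv_naturality, CostructuredArrow.w φ])
    fac s g := by
      refine ConcreteCategory.hom_ext _ _ fun (y : F.obj g.left) => ?_
      change desc _ _ ((tensor F).map g.hom ((tensorUnit F).app g.left y)) = legAt s g.hom y
      rw [tensor_map_tensorUnit_app, desc_mk, Equiv.symm_apply_apply,
        CostructuredArrow.mk_hom_eq_self, Equiv.apply_symm_apply]
    uniq s m hm := by
      refine hom_ext fun e x => ?_
      rw [desc_mk]
      refine (congr_arg (ConcreteCategory.hom m) ?_).trans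
        (ConcreteCategory.congr_hom (hm (CostructuredArrow.mk (coyonedaEquiv.symm x)))
          (yonedaEquiv e.hom))
      refine ((tensor_map_tensorUnit_app F _ _).trans ?_).symm
      rw [CostructuredArrow.mk_hom_eq_self, Equiv.apply_symm_apply, Equiv.symm_apply_apply]
      rfl }

instance : (tensor F).IsLeftKanExtension (tensorUnit F) :=
  (isPointwiseLeftKanExtensionTensorUnit F).isLeftKanExtension

instance : IsIso (tensorUnit F) :=
  (isPointwiseLeftKanExtensionTensorUnit F).isIso_hom

lemma tensorUnit_app_injective (d : Aᵒᵖ) : Function.Injective ((tensorUnit F).app d) :=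
  (mono_iff_injective _).1 inferInstance

instance [IsFiltered (CostructuredArrow yoneda F)] : PreservesFiniteLimits (tensor F) := by
  unfold tensor
  infer_instance

theorem isFiltered_costructuredArrow_yoneda_of_tensor_preservesLimit
    (h : ∀ (J : Type u) [SmallCategory J] [FinCategory J] (D : J ⥤ Aᵒᵖ),
      PreservesLimit (D ⋙ coyoneda) (tensor F)) :
    IsFiltered (CostructuredArrow yoneda F) := by
  refine IsFiltered.of_cocone_nonempty.{u} _ fun {J} _ _ B => ?_
  let D : Jᵒᵖ ⥤ Aᵒᵖ := (B ⋙ CostructuredArrow.proj yoneda F).op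
  let y (j : Jᵒᵖ) : F.obj (D.obj j) := yonedaEquiv (B.obj j.unop).hom
  have hy {j j' : Jᵒᵖ} (f : j ⟶ j') : F.map (D.map f) (y j) = y j' :=
    (yonedaEquiv_naturality _ _).trans (congr_arg yonedaEquiv (CostructuredArrow.w (B.map f.unop)))
  have hL := isLimitOfPreserves (tensor F) (limit.isLimit (D ⋙ coyoneda))
  obtain ⟨z, hz, -⟩ := (Types.isLimit_iff _).1 ⟨hL⟩ (fun j => (tensorUnit F).app (D.obj j) (y j))
    fun f => ((tensorUnit F).naturality_apply (D.map f) _).symm.trans (congr_arg _ (hy f))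
  obtain ⟨e, ℓ, rfl⟩ := exists_eq_mk z
  let ι (j : J) : (B.obj j).left ⟶ e.left := (limit.π (D ⋙ coyoneda) (op j)).app e.left ℓ
  have hι (j : J) : yoneda.map (ι j) ≫ e.hom = (B.obj j).hom := by
    have hj := hz (op j)
    rw [Functor.mapCone_π_app, map_mk, mk_coyoneda_eq_tensorUnit_app] at hj
    apply yonedaEquiv.injective
    rw [← yonedaEquiv_naturality]
    exact tensorUnit_app_injective F _ hj
  refine ⟨⟨e, { app j := CostructuredArrow.homMk (ι j) (hι j), naturality j j' f := ?_ }⟩⟩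
  have hw := ConcreteCategory.congr_hom (NatTrans.congr_app (limit.w (D ⋙ coyoneda) f.op) e.left) ℓ
  ext
  simp only [Functor.const_obj_obj, CostructuredArrow.homMk_left, Functor.const_obj_map,
    Category.comp_id]
  exact hw

end CategoryTheory.Presheaf

namespace CategoryTheory

theorem isIndObject_iff_exists_isColimit {C : Type u} [Category.{v} C] (P : Cᵒᵖ ⥤ Type v) :
    IsIndObject P ↔ ∃ I : Cat.{v, v}, IsFiltered I ∧ ∃ (D : I ⥤ C) (t : Cocone (D ⋙ yoneda)),
      Nonempty (IsColimit t) ∧ Nonempty (t.pt ≅ P) := by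
  constructor
  · rintro ⟨⟨p⟩⟩
    exact ⟨Cat.of p.I, p.hI, p.F, p.cocone, ⟨p.coconeIsColimit⟩, ⟨Iso.refl _⟩⟩
  · rintro ⟨I, hI, D, t, ⟨ht⟩, ⟨i⟩⟩
    exact (IsIndObject.mk (IndObjectPresentation.ofCocone t ht)).map i.hom

theorem isIndObject_iff_isFiltered {A : Type u} [SmallCategory A] (F : Aᵒᵖ ⥤ Type u) :
    IsIndObject F ↔ IsFiltered (CostructuredArrow yoneda F) :=
  have := essentiallySmallSelf.{u} (CostructuredArrow yoneda F)
  have := finallySmall_of_essentiallySmall (CostructuredArrow yoneda F)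
  ⟨IsIndObject.isFiltered, fun _ => isIndObject_of_isFiltered_of_finallySmall F⟩

end CategoryTheory

open Presheaf in
/-- A presheaf `F : Aᵒᵖ ⥤ Type` is a filtered colimit of representables
if and only if its left Kan extension `G` along the contravariant Yoneda embedding
`coyoneda : Aᵒᵖ ⥤ (A ⥤ Type)` preserves finite limits of corepresentable functors,
i.e. limits of finite diagrams `K ⥤ Aᵒᵖ` composed with `coyoneda`. -/
theorem stmt17 {A : Type} [SmallCategory A] (F : Aᵒᵖ ⥤ Type)
    (G : (A ⥤ Type) ⥤ Type) (α : F ⟶ coyoneda ⋙ G) [G.IsLeftKanExtension α] :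
    (∃ I : Cat.{0, 0}, IsFiltered I ∧ ∃ (D : I ⥤ A) (t : Cocone (D ⋙ yoneda)),
        Nonempty (IsColimit t) ∧ Nonempty (t.pt ≅ F)) ↔
      (∀ (K : Cat.{0, 0}) [FinCategory K] (D : K ⥤ Aᵒᵖ) (c : Cone (D ⋙ coyoneda)),
        IsLimit c → Nonempty (IsLimit (G.mapCone c))) := by
  have e : G ≅ tensor F := leftKanExtensionUnique G α (tensor F) (tensorUnit F)
  rw [← isIndObject_iff_exists_isColimit, isIndObject_iff_isFiltered]
  constructor
  · intro _ K _ D c hc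
    have := preservesFiniteLimits_of_natIso e.symm
    exact ⟨isLimitOfPreserves G hc⟩
  · intro h
    refine isFiltered_costructuredArrow_yoneda_of_tensor_preservesLimit F fun J _ _ D => ?_
    have : PreservesLimit (D ⋙ coyoneda) G :=
      preservesLimit_of_preserves_limit_cone (limit.isLimit _)
        (@h (Cat.of J) ‹_› D _ (limit.isLimit _)).some
    exact preservesLimit_of_natIso _ e
end
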